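/- Let ℓ(s) = 1 + |log s|, ℓℓ(s) = 1 + log ℓ(s), ℓℓℓ(s) = 1 + log ℓℓ(s). For q ∈ [1,∞), one has ‖s^{-1/q'} ℓ(s)^{-1/q'} ℓℓ(s)^{-1/q'} ℓℓℓ(s)^{-1}‖_{L^{q'}(0,r)} ≈ ℓℓℓ(r)^{-1/q} near 0, with constants independent of r. -/

import Mathlib

/-! Put `a = 1/q'` and `p = 1/a = q'`. For `a > 0` the `p`-th power of the weight
`s^{-a} ℓ(s)^{-a} ℓℓ(s)^{-a} ℓℓℓ(s)^{-1}` is `(s ℓ(s) ℓℓ(s))⁻¹ ℓℓℓ(s)^{-p}`, the derivative on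
`(0,1)` of `ℓℓℓ^{1-p}/(p-1)`. This primitive tends to `0` at `0⁺`, so for `0 < r < 1` the
`L^p(0,r)` norm is exactly `(p-1)^{-1/p} ℓℓℓ(r)^{-1/q}`. For `a = 0` (that is, `q = 1`) the weight
is `ℓℓℓ⁻¹`, increasing and continuous on `(0,1)`, so its essential supremum over `(0,r)` is
`ℓℓℓ(r)⁻¹`. Hence the estimate holds with `c = C`. -/

open MeasureTheory Set
open scoped ENNReal

noncomputable def ell (s : ℝ) : ℝ := 1 + |Real.log s|
noncomputable def ellell (s : ℝ) : ℝ := 1 + Real.log (ell s)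
noncomputable def ellellell (s : ℝ) : ℝ := 1 + Real.log (ellell s)

open Filter Topology

theorem lintegral_Ioo_ofReal_eq_sub_of_hasDerivAt_of_tendsto {f f' : ℝ → ℝ} {a b fa fb : ℝ}
    (hab : a < b) (hderiv : ∀ x ∈ Ioo a b, HasDerivAt f (f' x) x)
    (hnonneg : ∀ x ∈ Ioo a b, 0 ≤ f' x) (ha : Tendsto f (𝓝[>] a) (𝓝 fa))
    (hb : Tendsto f (𝓝[<] b) (𝓝 fb)) :
    ∫⁻ x in Ioo a b, ENNReal.ofReal (f' x) = ENNReal.ofReal (fb - fa) := by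
  classical
  -- the endpoint values are patched so that the FTC's continuity hypothesis on `[a, b]` holds
  set g := Function.update (Function.update f a fa) b fb
  have hg : ∀ x ∈ Ioo a b, HasDerivAt g (f' x) x := fun x hx =>
    (hderiv x hx).congr_of_eventuallyEq <| by
      filter_upwards [Ioo_mem_nhds hx.1 hx.2] with y hy
      simp [g, hy.2.ne, hy.1.ne']
  have hcont : ContinuousOn g (Icc a b) := by
    rw [continuousOn_update_iff, continuousOn_update_iff, Icc_sdiff_right, Ico_sdiff_left]
    refine ⟨⟨fun x hx => (hderiv x hx).continuousAt.continuousWithinAt, fun _ =>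
      ha.mono_left (nhdsWithin_mono _ Ioo_subset_Ioi_self)⟩, fun _ => ?_⟩
    refine (hb.congr' ?_).mono_left (nhdsWithin_mono _ Ico_subset_Iio_self)
    filter_upwards [Ioo_mem_nhdsLT hab] with y hy using (Function.update_of_ne hy.1.ne' _ _).symm
  have hint : IntegrableOn f' (Ioc a b) :=
    intervalIntegral.integrableOn_deriv_of_nonneg hcont hg hnonneg
  rw [← ofReal_integral_eq_lintegral_ofReal (hint.mono_set Ioo_subset_Ioc_self)
      ((ae_restrict_iff' measurableSet_Ioo).2 (.of_forall hnonneg)),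
    ← integral_Ioc_eq_integral_Ioo, ← intervalIntegral.integral_of_le hab.le,
    intervalIntegral.integral_eq_sub_of_hasDerivAt_of_tendsto hab hderiv
      ((intervalIntegrable_iff_integrableOn_Ioc_of_le hab.le).2 hint) ha hb]

theorem enorm_le_eLpNormEssSup_restrict_Ioo {f : ℝ → ℝ} {a b : ℝ} (hab : a < b)
    (hf : ContinuousWithinAt f (Iio b) b) :
    ‖f b‖ₑ ≤ eLpNormEssSup f (volume.restrict (Ioo a b)) := by
  by_contra! h
  have hev : ∀ᶠ y in 𝓝[<] b, y ∈ Ioo a b ∧ eLpNormEssSup f (volume.restrict (Ioo a b)) < ‖f y‖ₑ :=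
    Eventually.and (Ioo_mem_nhdsLT hab)
      ((continuous_enorm.continuousAt.comp_continuousWithinAt hf).eventually (lt_mem_nhds h))
  obtain ⟨l, hl, hsub⟩ := (mem_nhdsLT_iff_exists_Ioo_subset' hab).1 hev
  have hnull := meas_eLpNormEssSup_lt (f := f) (μ := volume.restrict (Ioo a b))
  rw [Measure.restrict_apply' measurableSet_Ioo] at hnull
  have hpos : 0 < volume (Ioo l b) := by simpa using hl
  exact hpos.ne' (measure_mono_null (fun y hy => And.intro (hsub hy).2 (hsub hy).1) hnull)

lemma one_le_ell (s : ℝ) : 1 ≤ ell s := le_add_of_nonneg_right (abs_nonneg _)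

lemma one_le_ellell (s : ℝ) : 1 ≤ ellell s :=
  le_add_of_nonneg_right (Real.log_nonneg (one_le_ell s))

lemma one_le_ellellell (s : ℝ) : 1 ≤ ellellell s :=
  le_add_of_nonneg_right (Real.log_nonneg (one_le_ellell s))

lemma ell_pos (s : ℝ) : 0 < ell s := one_pos.trans_le (one_le_ell s)

lemma ellell_pos (s : ℝ) : 0 < ellell s := one_pos.trans_le (one_le_ellell s)

lemma ellellell_pos (s : ℝ) : 0 < ellellell s := one_pos.trans_le (one_le_ellellell s)

lemma antitoneOn_ell : AntitoneOn ell (Ioc 0 1) := fun s hs t ht hst => by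
  have hlog_t : Real.log t ≤ 0 := Real.log_nonpos ht.1.le ht.2
  have hlog_s : Real.log s ≤ Real.log t := Real.log_le_log hs.1 hst
  rw [ell, ell, abs_of_nonpos hlog_t, abs_of_nonpos (hlog_s.trans hlog_t)]
  linarith

lemma antitoneOn_ellell : AntitoneOn ellell (Ioc 0 1) := fun _ hs t ht hst =>
  add_le_add_right (Real.log_le_log (ell_pos t) (antitoneOn_ell hs ht hst)) 1

lemma antitoneOn_ellellell : AntitoneOn ellellell (Ioc 0 1) := fun _ hs t ht hst =>
  add_le_add_right (Real.log_le_log (ellell_pos t) (antitoneOn_ellell hs ht hst)) 1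

lemma tendsto_ellellell_nhdsGT_zero : Tendsto ellellell (𝓝[>] 0) atTop := by
  have h_ell : Tendsto ell (𝓝[>] 0) atTop :=
    tendsto_atTop_add_const_left _ 1 (tendsto_abs_atBot_atTop.comp Real.tendsto_log_nhdsGT_zero)
  have h_ellell : Tendsto ellell (𝓝[>] 0) atTop :=
    tendsto_atTop_add_const_left _ 1 (Real.tendsto_log_atTop.comp h_ell)
  exact tendsto_atTop_add_const_left _ 1 (Real.tendsto_log_atTop.comp h_ellell)

section Derivatives

variable {s : ℝ}

lemma hasDerivAt_ell (hs : 0 < s) (hs1 : s < 1) : HasDerivAt ell (-s⁻¹) s := by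
  have h : HasDerivAt (fun t => 1 - Real.log t) (-s⁻¹) s := by
    simpa using (Real.hasDerivAt_log hs.ne').const_sub 1
  refine h.congr_of_eventuallyEq ?_
  filter_upwards [Ioo_mem_nhds hs hs1] with t ht
  rw [ell, abs_of_nonpos (Real.log_nonpos ht.1.le ht.2.le), sub_eq_add_neg]

lemma hasDerivAt_ellell (hs : 0 < s) (hs1 : s < 1) :
    HasDerivAt ellell (-(s * ell s)⁻¹) s := by
  refine (((hasDerivAt_ell hs hs1).log (ell_pos s).ne').const_add 1).congr_deriv ?_
  rw [mul_inv]; ring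

lemma hasDerivAt_ellellell (hs : 0 < s) (hs1 : s < 1) :
    HasDerivAt ellellell (-(s * ell s * ellell s)⁻¹) s := by
  refine (((hasDerivAt_ellell hs hs1).log (ellell_pos s).ne').const_add 1).congr_deriv ?_
  rw [mul_inv (s * ell s)]; ring

end Derivatives

noncomputable def logWeight (a s : ℝ) : ℝ :=
  s ^ (-a) * ell s ^ (-a) * ellell s ^ (-a) * ellellell s ^ (-1 : ℝ)

section LogWeight

variable {a r s : ℝ}

lemma logWeight_nonneg (hs : 0 ≤ s) : 0 ≤ logWeight a s := by
  have := (ell_pos s).le; have := (ellell_pos s).le; have := (ellellell_pos s).le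
  unfold logWeight; positivity

lemma logWeight_rpow_inv (ha : 0 < a) (hs : 0 < s) :
    logWeight a s ^ a⁻¹ = (s * ell s * ellell s)⁻¹ * ellellell s ^ (-a⁻¹) := by
  have := (ell_pos s).le; have := (ellell_pos s).le; have := (ellellell_pos s).le
  rw [logWeight, Real.mul_rpow (by positivity) (by positivity),
    Real.mul_rpow (by positivity) (by positivity), Real.mul_rpow (by positivity) (by positivity),
    ← Real.rpow_mul hs.le, ← Real.rpow_mul (ell_pos s).le, ← Real.rpow_mul (ellell_pos s).le,
    ← Real.rpow_mul (ellellell_pos s).le, neg_mul, mul_inv_cancel₀ ha.ne', Real.rpow_neg_one,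
    Real.rpow_neg_one, Real.rpow_neg_one, neg_one_mul, mul_inv, mul_inv]

lemma hasDerivAt_ellellell_rpow_div {p : ℝ} (hp : 1 < p) (hs : 0 < s) (hs1 : s < 1) :
    HasDerivAt (fun t => ellellell t ^ (1 - p) / (p - 1))
      ((s * ell s * ellell s)⁻¹ * ellellell s ^ (-p)) s := by
  refine (((hasDerivAt_ellellell hs hs1).rpow_const (p := 1 - p)
    (Or.inl (ellellell_pos s).ne')).div_const (p - 1)).congr_deriv ?_
  rw [show 1 - p - 1 = -p by ring]
  field_simp [show p - 1 ≠ 0 by linarith]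
  ring

lemma lintegral_logWeight_rpow_inv (ha0 : 0 < a) (ha1 : a < 1) (hr0 : 0 < r) (hr1 : r < 1) :
    ∫⁻ s in Ioo 0 r, ‖logWeight a s‖ₑ ^ a⁻¹ =
      ENNReal.ofReal (ellellell r ^ (1 - a⁻¹) / (a⁻¹ - 1)) := by
  have hp : 1 < a⁻¹ := one_lt_inv₀ ha0 |>.2 ha1
  have hsub : ∀ s ∈ Ioo 0 r, s ∈ Ioo (0 : ℝ) 1 := fun s hs => ⟨hs.1, hs.2.trans hr1⟩
  have hderiv := fun s hs => hasDerivAt_ellellell_rpow_div hp (hsub s hs).1 (hsub s hs).2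
  have hzero : Tendsto (fun t => ellellell t ^ (1 - a⁻¹) / (a⁻¹ - 1)) (𝓝[>] 0) (𝓝 0) := by
    have := ((tendsto_rpow_neg_atTop (sub_pos.2 hp)).comp tendsto_ellellell_nhdsGT_zero).div_const
      (a⁻¹ - 1)
    simpa [Function.comp_def] using this
  have hr : Tendsto (fun t => ellellell t ^ (1 - a⁻¹) / (a⁻¹ - 1)) (𝓝[<] r)
      (𝓝 (ellellell r ^ (1 - a⁻¹) / (a⁻¹ - 1))) :=
    (hasDerivAt_ellellell_rpow_div hp hr0 hr1).continuousAt.tendsto.mono_left nhdsWithin_le_nhds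
  rw [← sub_zero (ellellell r ^ (1 - a⁻¹) / (a⁻¹ - 1)),
    ← lintegral_Ioo_ofReal_eq_sub_of_hasDerivAt_of_tendsto hr0 hderiv _ hzero hr]
  · refine setLIntegral_congr_fun measurableSet_Ioo fun s hs => ?_
    rw [Real.enorm_eq_ofReal (logWeight_nonneg hs.1.le),
      ENNReal.ofReal_rpow_of_nonneg (logWeight_nonneg hs.1.le) (inv_nonneg.2 ha0.le),
      logWeight_rpow_inv ha0 hs.1]
  · intro s hs
    have := (ell_pos s).le; have := (ellell_pos s).le; have := (ellellell_pos s).le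
    have := hs.1.le
    positivity

lemma eLpNorm_logWeight_of_pos (ha0 : 0 < a) (ha1 : a < 1) (hr0 : 0 < r) (hr1 : r < 1) :
    eLpNorm (logWeight a) (ENNReal.ofReal a⁻¹) (volume.restrict (Ioo 0 r)) =
      ENNReal.ofReal ((a⁻¹ - 1) ^ (-a) * ellellell r ^ (-(1 - a))) := by
  have hp : 0 < a⁻¹ - 1 := sub_pos.2 (one_lt_inv₀ ha0 |>.2 ha1)
  have hL := ellellell_pos r
  rw [eLpNorm_eq_lintegral_rpow_enorm_toReal (by simpa using ha0) ENNReal.ofReal_ne_top,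
    ENNReal.toReal_ofReal (inv_nonneg.2 ha0.le), lintegral_logWeight_rpow_inv ha0 ha1 hr0 hr1,
    one_div, inv_inv, ENNReal.ofReal_rpow_of_nonneg (by positivity) ha0.le,
    Real.div_rpow (by positivity) hp.le, ← Real.rpow_mul hL.le, Real.rpow_neg hp.le,
    div_eq_inv_mul, sub_mul, inv_mul_cancel₀ ha0.ne', one_mul, neg_sub]

lemma eLpNormEssSup_logWeight_zero (hr0 : 0 < r) (hr1 : r < 1) :
    eLpNormEssSup (logWeight 0) (volume.restrict (Ioo 0 r)) = ENNReal.ofReal (ellellell r)⁻¹ := by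
  have hw : logWeight 0 = fun s => (ellellell s)⁻¹ := by
    ext s; simp [logWeight, Real.rpow_neg_one]
  rw [hw]
  refine le_antisymm (eLpNormEssSup_le_of_ae_enorm_bound ?_) ?_
  · refine (ae_restrict_iff' measurableSet_Ioo).2 (.of_forall fun s hs => ?_)
    rw [Real.enorm_eq_ofReal (inv_nonneg.2 (ellellell_pos s).le)]
    exact ENNReal.ofReal_le_ofReal <| inv_anti₀ (ellellell_pos r) <|
      antitoneOn_ellellell ⟨hs.1, (hs.2.trans hr1).le⟩ ⟨hr0, hr1.le⟩ hs.2.le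
  · rw [← Real.enorm_eq_ofReal (inv_nonneg.2 (ellellell_pos r).le)]
    exact enorm_le_eLpNormEssSup_restrict_Ioo (f := fun s => (ellellell s)⁻¹) hr0
      ((hasDerivAt_ellellell hr0 hr1).continuousAt.inv₀ (ellellell_pos r).ne').continuousWithinAt

-- `(ENNReal.ofReal a)⁻¹` is the exponent `1/a`, equal to `∞` at `a = 0`, where the constant is
-- `(0⁻¹ - 1) ^ 0 = 1`.
lemma eLpNorm_logWeight (ha0 : 0 ≤ a) (ha1 : a < 1) (hr0 : 0 < r) (hr1 : r < 1) :
    eLpNorm (logWeight a) (ENNReal.ofReal a)⁻¹ (volume.restrict (Ioo 0 r)) =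
      ENNReal.ofReal ((a⁻¹ - 1) ^ (-a) * ellellell r ^ (-(1 - a))) := by
  rcases ha0.eq_or_lt with rfl | ha0
  · simpa [Real.rpow_neg_one] using eLpNormEssSup_logWeight_zero hr0 hr1
  · rw [← ENNReal.ofReal_inv_of_pos ha0]
    exact eLpNorm_logWeight_of_pos ha0 ha1 hr0 hr1

end LogWeight

theorem stmt14_general (q q' : ℝ≥0∞) (hq' : q ≠ ⊤) (hconj : 1 / q + 1 / q' = 1) :
    ∃ c C r₀ : ℝ, 0 < c ∧ 0 < C ∧ 0 < r₀ ∧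
      ∀ r ∈ Set.Ioo (0 : ℝ) r₀,
        ENNReal.ofReal (c * ellellell r ^ (-(1 / q).toReal)) ≤
            eLpNorm (fun s : ℝ =>
                s ^ (-(1 / q').toReal) * ell s ^ (-(1 / q').toReal) *
                  ellell s ^ (-(1 / q').toReal) * ellellell s ^ (-1 : ℝ))
              q' (volume.restrict (Set.Ioo (0 : ℝ) r)) ∧
          eLpNorm (fun s : ℝ =>
                s ^ (-(1 / q').toReal) * ell s ^ (-(1 / q').toReal) *
                  ellell s ^ (-(1 / q').toReal) * ellellell s ^ (-1 : ℝ))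
              q' (volume.restrict (Set.Ioo (0 : ℝ) r)) ≤
            ENNReal.ofReal (C * ellellell r ^ (-(1 / q).toReal)) := by
  set a := (1 / q').toReal
  have hq_ne_top : 1 / q ≠ ⊤ := ne_top_of_le_ne_top ENNReal.one_ne_top (le_self_add.trans_eq hconj)
  have hq'_lt_one : 1 / q' < 1 := by
    have := ENNReal.lt_add_right (a := 1 / q') (b := 1 / q)
      (ne_top_of_le_ne_top ENNReal.one_ne_top (le_add_self.trans_eq hconj)) (by simpa using hq')
    rwa [add_comm, hconj] at this
  have ha1 : a < 1 := by
    simpa only [ENNReal.toReal_one] using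
      (ENNReal.toReal_lt_toReal hq'_lt_one.ne_top ENNReal.one_ne_top).2 hq'_lt_one
  have hq'_eq : q' = (ENNReal.ofReal a)⁻¹ := by
    rw [ENNReal.ofReal_toReal hq'_lt_one.ne_top, one_div, inv_inv]
  have hq_eq : (1 / q).toReal = 1 - a := by
    rw [eq_sub_iff_add_eq, ← ENNReal.toReal_add hq_ne_top hq'_lt_one.ne_top, hconj,
      ENNReal.toReal_one]
  have hK : 0 < (a⁻¹ - 1) ^ (-a) := by
    rcases (show 0 ≤ a from ENNReal.toReal_nonneg).eq_or_lt with ha0 | ha0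
    · rw [← ha0]; simp
    · exact Real.rpow_pos_of_pos (sub_pos.2 (one_lt_inv₀ ha0 |>.2 ha1)) _
  refine ⟨_, _, 1, hK, hK, one_pos, fun r hr => ?_⟩
  have h := eLpNorm_logWeight ENNReal.toReal_nonneg ha1 hr.1 hr.2
  rw [← hq'_eq, ← hq_eq] at h
  exact ⟨h.ge, h.le⟩

/-- For `q ∈ [1,∞)`:
`‖s^{-1/q'} ℓ(s)^{-1/q'} ℓℓ(s)^{-1/q'} ℓℓℓ(s)^{-1}‖_{L^{q'}(0,r)} ≈ ℓℓℓ(r)^{-1/q}` near `0`. -/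
theorem stmt14 (q q' : ℝ≥0∞) (hq : 1 ≤ q) (hq' : q ≠ ⊤) (hconj : 1 / q + 1 / q' = 1) :
    ∃ c C r₀ : ℝ, 0 < c ∧ 0 < C ∧ 0 < r₀ ∧
      ∀ r ∈ Set.Ioo (0 : ℝ) r₀,
        ENNReal.ofReal (c * ellellell r ^ (-(1 / q).toReal)) ≤
            eLpNorm (fun s : ℝ =>
                s ^ (-(1 / q').toReal) * ell s ^ (-(1 / q').toReal) *
                  ellell s ^ (-(1 / q').toReal) * ellellell s ^ (-1 : ℝ))
              q' (volume.restrict (Set.Ioo (0 : ℝ) r)) ∧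
          eLpNorm (fun s : ℝ =>
                s ^ (-(1 / q').toReal) * ell s ^ (-(1 / q').toReal) *
                  ellell s ^ (-(1 / q').toReal) * ellellell s ^ (-1 : ℝ))
              q' (volume.restrict (Set.Ioo (0 : ℝ) r)) ≤
            ENNReal.ofReal (C * ellellell r ^ (-(1 / q).toReal)) :=
  stmt14_general q q' hq' hconj
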